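/- arXiv:1612.00142 — 2 statements merged into one kernel-verified Lean document; each statement's English description precedes it below -/
import Mathlib

section
/- Let Q0 := {x ∈ ℝⁿ : g_j(x) ≤ 0 for all j = 1,…,m}, let x⁰ ∈ Q0 and u ∈ ℝⁿ. Suppose that for each i ∈ {1,…,l} there exists wⁱ ∈ ℝⁿ such that ⟨∇f_k(x⁰), wⁱ⟩ + f_k°°(x⁰; u, u) < 0 for all k ∈ {1,…,l} \ {i} and ⟨∇g_j(x⁰), wⁱ⟩ + g_j°°(x⁰; u, u) < 0 for all j ∈ J(x⁰; u). Then the Abadie second-order regularity condition holds at x⁰ for the direction u, i.e. L²(Q; x⁰, u) ⊆ ∩_{i=1}^l T²(Qⁱ; x⁰, u), where Qⁱ := Q0 ∩ {x : f_k(x) ≤ f_k(x⁰) for all k ≠ i}. -/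
open Filter Topology Set
open scoped InnerProductSpace

/-!
Let `c > φ°°(x⁰; u, u)`. The derivative of `s ↦ φ(x⁰ + s u + ½ s² v)` is
`⟨∇φ(x⁰ + s u + ½ s² v), u⟩ + s ⟨∇φ(x⁰ + s u + ½ s² v), v⟩`. The limsup defining `φ°°`, taken
at the moving base point `x⁰ + ½ s² v`, and the Lipschitz bound on `∇φ` estimate the first term
by `⟨∇φ(x⁰), u⟩ + s c + o(s)`; continuity of `∇φ` handles the second. So for small `s > 0` the
derivative is at most `⟨∇φ(x⁰), u⟩ + s (⟨∇φ(x⁰), v⟩ + c)`, and integrating gives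
`φ(x⁰ + t u + ½ t² v) ≤ φ(x⁰) + t ⟨∇φ(x⁰), u⟩ + ½ t² (⟨∇φ(x⁰), v⟩ + c)`.
So a direction `v` satisfying the lexicographic inequalities strictly keeps `φ ≤ φ(x⁰)`
along the parabola for small `t`. For `v ∈ L²` the directions `v + θ (wⁱ - v)`, `0 < θ ≤ 1`,
satisfy the strict inequalities for every `k ≠ i` and every active `j`, and tend to `v` as
`θ → 0`; a diagonal choice of `t` then exhibits `v ∈ T²(Qⁱ; x⁰, u)`.
-/

noncomputable section

/-- A function is `C^{1,1}` iff it is Fréchet differentiable with locally Lipschitz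
gradient. -/
def IsC11 {n : ℕ} (φ : EuclideanSpace ℝ (Fin n) → ℝ) : Prop :=
  Differentiable ℝ φ ∧ LocallyLipschitz (gradient φ)

/-- `φ°°(x⁰; u, u) = limsup_{x → x⁰, t ↓ 0} (⟨∇φ(x + t u), u⟩ − ⟨∇φ(x), u⟩)/t`. -/
def secondDD {n : ℕ} (φ : EuclideanSpace ℝ (Fin n) → ℝ)
    (x0 u : EuclideanSpace ℝ (Fin n)) : ℝ :=
  Filter.limsup
    (fun p : EuclideanSpace ℝ (Fin n) × ℝ =>
      (⟪gradient φ (p.1 + p.2 • u), u⟫_ℝ - ⟪gradient φ p.1, u⟫_ℝ) / p.2)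
    ((𝓝 x0) ×ˢ (𝓝[>] (0 : ℝ)))

/-- The second-order tangent set `T²(C; x⁰, u)`. -/
def tcone2 {n : ℕ} (C : Set (EuclideanSpace ℝ (Fin n)))
    (x0 u : EuclideanSpace ℝ (Fin n)) : Set (EuclideanSpace ℝ (Fin n)) :=
  {v | ∃ t : ℕ → ℝ, ∃ vk : ℕ → EuclideanSpace ℝ (Fin n),
    (∀ k, 0 < t k) ∧ Tendsto t atTop (𝓝 0) ∧ Tendsto vk atTop (𝓝 v) ∧
    ∀ k, x0 + t k • u + ((1 / 2) * (t k) ^ 2) • vk k ∈ C}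

/-- `(a₁, a₂) ≦_lex (0, 0)`. -/
def lexLE (a : ℝ × ℝ) : Prop := a.1 < 0 ∨ (a.1 = 0 ∧ a.2 ≤ 0)

/-- The second-order linearizing set `L²(Q; x⁰, u)`. -/
def L2lin {n l m : ℕ} (f : Fin l → EuclideanSpace ℝ (Fin n) → ℝ)
    (g : Fin m → EuclideanSpace ℝ (Fin n) → ℝ)
    (x0 u : EuclideanSpace ℝ (Fin n)) : Set (EuclideanSpace ℝ (Fin n)) :=
  {v | (∀ i, lexLE (⟪gradient (f i) x0, u⟫_ℝ,
          ⟪gradient (f i) x0, v⟫_ℝ + secondDD (f i) x0 u)) ∧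
       (∀ j, g j x0 = 0 → lexLE (⟪gradient (g j) x0, u⟫_ℝ,
          ⟪gradient (g j) x0, v⟫_ℝ + secondDD (g j) x0 u))}

lemma eventually_le_of_eventually_deriv_le {ψ ψ' : ℝ → ℝ} {a c : ℝ}
    (hψ : ∀ s, HasDerivAt ψ (ψ' s) s) (hbound : ∀ᶠ s in 𝓝[>] 0, ψ' s ≤ a + c * s) :
    ∀ᶠ t in 𝓝[>] 0, ψ t ≤ ψ 0 + a * t + c * t ^ 2 / 2 := by
  obtain ⟨ε, hε, hεbound⟩ := mem_nhdsGT_iff_exists_Ioo_subset.1 hbound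
  filter_upwards [Ioo_mem_nhdsGT hε] with t ⟨ht, htε⟩
  have hF : ∀ s, HasDerivAt (fun s => a * s + c * s ^ 2 / 2 - ψ s) (a + c * s - ψ' s) s := by
    intro s
    have := (((hasDerivAt_id' s).const_mul a).add
      (((hasDerivAt_pow 2 s).const_mul c).div_const 2)).sub (hψ s)
    refine this.congr_deriv ?_
    push_cast
    ring
  have hmono : MonotoneOn (fun s => a * s + c * s ^ 2 / 2 - ψ s) (Icc 0 t) := by
    refine monotoneOn_of_deriv_nonneg (convex_Icc 0 t)
      (fun s _ => (hF s).continuousAt.continuousWithinAt)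
      (fun s _ => (hF s).differentiableAt.differentiableWithinAt) fun s hs => ?_
    rw [interior_Icc] at hs
    rw [(hF s).deriv, sub_nonneg]
    exact hεbound ⟨hs.1, hs.2.trans htε⟩
  have := hmono (left_mem_Icc.2 ht.le) (right_mem_Icc.2 ht.le) ht.le
  linarith

section Calculus

variable {F : Type*} [NormedAddCommGroup F] [InnerProductSpace ℝ F]

lemma LipschitzOnWith.inner_le_inner_add {X : Type*} [PseudoMetricSpace X] {G : X → F}
    {K : NNReal} {s : Set X} (hG : LipschitzOnWith K G s) {x y : X} (hx : x ∈ s) (hy : y ∈ s)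
    (z : F) : ⟪G x, z⟫_ℝ ≤ ⟪G y, z⟫_ℝ + K * dist x y * ‖z‖ := by
  have hxy : ⟪G x - G y, z⟫_ℝ ≤ K * dist x y * ‖z‖ :=
    calc ⟪G x - G y, z⟫_ℝ ≤ ‖G x - G y‖ * ‖z‖ := real_inner_le_norm _ _
      _ ≤ K * dist x y * ‖z‖ := by
        rw [← dist_eq_norm]
        exact mul_le_mul_of_nonneg_right (hG.dist_le_mul x hx y hy) (norm_nonneg z)
  rw [inner_sub_left] at hxy
  linarith

lemma DifferentiableAt.hasDerivAt_comp_inner_gradient [CompleteSpace F] {φ : F → ℝ} {γ : ℝ → F}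
    {γ' : F} {s : ℝ} (hφ : DifferentiableAt ℝ φ (γ s)) (hγ : HasDerivAt γ γ' s) :
    HasDerivAt (fun s => φ (γ s)) ⟪gradient φ (γ s), γ'⟫_ℝ s := by
  rw [inner_gradient_left]
  exact hφ.hasFDerivAt.comp_hasDerivAt s hγ

lemma isBoundedUnder_le_inner_gradient_slope [CompleteSpace F] {φ : F → ℝ}
    (hφ : LocallyLipschitz (gradient φ)) (x0 u : F) :
    IsBoundedUnder (· ≤ ·) (𝓝 x0 ×ˢ 𝓝[>] 0)
      (fun p : F × ℝ => (⟪gradient φ (p.1 + p.2 • u), u⟫_ℝ - ⟪gradient φ p.1, u⟫_ℝ) / p.2) := by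
  obtain ⟨K, U, hU, hK⟩ := hφ x0
  have hshift : Tendsto (fun p : F × ℝ => p.1 + p.2 • u) (𝓝 x0 ×ˢ 𝓝[>] 0) (𝓝 x0) := by
    simpa using (tendsto_fst (f := 𝓝 x0) (g := 𝓝[>] (0 : ℝ))).add
      (((tendsto_snd (f := 𝓝 x0)).mono_right nhdsWithin_le_nhds).smul_const u)
  refine isBoundedUnder_of_eventually_le (a := K * ‖u‖ * ‖u‖) ?_
  filter_upwards [tendsto_fst hU, hshift hU, tendsto_snd self_mem_nhdsWithin]
    with p hp hpu (ht : 0 < p.2)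
  have hlip := hK.inner_le_inner_add hpu hp u
  rw [dist_eq_norm, add_sub_cancel_left, norm_smul, Real.norm_of_nonneg ht.le] at hlip
  rw [div_le_iff₀ ht]
  linarith

end Calculus

section SecondOrder

variable {n : ℕ}
local notation "E" => EuclideanSpace ℝ (Fin n)

lemma eventually_inner_gradient_le_of_secondDD_lt {φ : E → ℝ}
    (hφ : LocallyLipschitz (gradient φ)) {x0 u : E} {c : ℝ} (hc : secondDD φ x0 u < c) :
    ∀ᶠ p in 𝓝 x0 ×ˢ 𝓝[>] (0 : ℝ),
      ⟪gradient φ (p.1 + p.2 • u), u⟫_ℝ ≤ ⟪gradient φ p.1, u⟫_ℝ + c * p.2 := by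
  filter_upwards [eventually_lt_of_limsup_lt hc (isBoundedUnder_le_inner_gradient_slope hφ x0 u),
    tendsto_snd self_mem_nhdsWithin] with p hp (ht : 0 < p.2)
  rw [div_lt_iff₀ ht] at hp
  linarith

lemma IsC11.eventually_le_add_secondDD {φ : E → ℝ} (hφ : IsC11 φ) {x0 u : E} (v : E) {c : ℝ}
    (hc : secondDD φ x0 u < c) :
    ∀ᶠ t in 𝓝[>] (0 : ℝ), φ (x0 + t • u + ((1 / 2) * t ^ 2) • v) ≤
      φ x0 + t * ⟪gradient φ x0, u⟫_ℝ + (1 / 2) * t ^ 2 * (⟪gradient φ x0, v⟫_ℝ + c) := by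
  obtain ⟨hdiff, hlip⟩ := hφ
  set γ : ℝ → E := fun s => x0 + s • u + ((1 / 2) * s ^ 2) • v
  obtain ⟨c', hDc', hc'c⟩ := exists_between hc
  have hγ' : ∀ s, HasDerivAt γ (u + s • v) s := by
    intro s
    refine (((hasDerivAt_id' s).smul_const u).const_add x0).add
      (((hasDerivAt_pow 2 s).const_mul (1 / 2)).smul_const v) |>.congr_deriv ?_
    push_cast
    rw [one_smul]
    congr 2
    ring
  have hbase : Tendsto (fun s : ℝ => x0 + ((1 / 2) * s ^ 2) • v) (𝓝[>] 0) (𝓝 x0) := by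
    have : Continuous (fun s : ℝ => x0 + ((1 / 2) * s ^ 2) • v) := by fun_prop
    simpa using (this.tendsto 0).mono_left nhdsWithin_le_nhds
  have hγ0 : Tendsto γ (𝓝[>] 0) (𝓝 x0) := by
    simpa [γ] using (hγ' 0).continuousAt.tendsto.mono_left nhdsWithin_le_nhds
  have hslope : ∀ᶠ s in 𝓝[>] (0 : ℝ),
      ⟪gradient φ (γ s), u⟫_ℝ ≤ ⟪gradient φ (x0 + ((1 / 2) * s ^ 2) • v), u⟫_ℝ + c' * s := by
    filter_upwards [(hbase.prodMk tendsto_id).eventually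
      (eventually_inner_gradient_le_of_secondDD_lt hlip hDc')] with s hs
    simp only [γ] at hs ⊢
    rwa [add_right_comm]
  obtain ⟨K, U, hU, hK⟩ := hlip x0
  have hcont : ∀ᶠ s in 𝓝[>] (0 : ℝ),
      ⟪gradient φ (γ s), v⟫_ℝ < ⟪gradient φ x0, v⟫_ℝ + (c - c') / 2 :=
    (((hlip.continuous.tendsto x0).comp hγ0).inner tendsto_const_nhds).eventually_lt_const
      (by linarith)
  have hsmall : ∀ᶠ s in 𝓝[>] (0 : ℝ), K * ((1 / 2) * s * ‖v‖) * ‖u‖ < (c - c') / 2 := by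
    have : Continuous (fun s : ℝ => K * ((1 / 2) * s * ‖v‖) * ‖u‖) := by fun_prop
    exact ((this.tendsto' 0 0 (by simp)).mono_left nhdsWithin_le_nhds).eventually_lt_const
      (by linarith)
  have hderiv : ∀ᶠ s in 𝓝[>] (0 : ℝ), ⟪gradient φ (γ s), u + s • v⟫_ℝ ≤
      ⟪gradient φ x0, u⟫_ℝ + (⟪gradient φ x0, v⟫_ℝ + c) * s := by
    filter_upwards [hslope, hbase hU, hcont, hsmall, self_mem_nhdsWithin]
      with s h1 h2 h3 h4 (hs : 0 < s)
    have h5 := hK.inner_le_inner_add h2 (mem_of_mem_nhds hU) u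
    rw [dist_eq_norm, add_sub_cancel_left, norm_smul,
      Real.norm_of_nonneg (by positivity)] at h5
    rw [inner_add_right, real_inner_smul_right]
    nlinarith [mul_lt_mul_of_pos_left h3 hs, mul_lt_mul_of_pos_left h4 hs]
  filter_upwards [eventually_le_of_eventually_deriv_le
    (fun s => (hdiff _).hasDerivAt_comp_inner_gradient (hγ' s)) hderiv] with t ht
  rw [show γ 0 = x0 by simp [γ]] at ht
  linarith

lemma IsC11.eventually_le_of_lex_lt {φ : E → ℝ} (hφ : IsC11 φ) {x0 u v : E}
    (h : ⟪gradient φ x0, u⟫_ℝ < 0 ∨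
      (⟪gradient φ x0, u⟫_ℝ = 0 ∧ ⟪gradient φ x0, v⟫_ℝ + secondDD φ x0 u < 0)) :
    ∀ᶠ t in 𝓝[>] (0 : ℝ), φ (x0 + t • u + ((1 / 2) * t ^ 2) • v) ≤ φ x0 := by
  rcases h with hu | ⟨hu, hv⟩
  · have hsmall : ∀ᶠ t in 𝓝[>] (0 : ℝ), ⟪gradient φ x0, u⟫_ℝ +
        (1 / 2) * t * (⟪gradient φ x0, v⟫_ℝ + (secondDD φ x0 u + 1)) < 0 := by
      have : Continuous (fun t : ℝ => ⟪gradient φ x0, u⟫_ℝ +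
          (1 / 2) * t * (⟪gradient φ x0, v⟫_ℝ + (secondDD φ x0 u + 1))) := by fun_prop
      exact ((this.tendsto' 0 _ (by simp)).mono_left nhdsWithin_le_nhds).eventually_lt_const hu
    filter_upwards [hφ.eventually_le_add_secondDD v (lt_add_one _), hsmall,
      self_mem_nhdsWithin] with t h1 h2 (ht : 0 < t)
    calc _ ≤ _ := h1
      _ = φ x0 + t * (⟪gradient φ x0, u⟫_ℝ +
          (1 / 2) * t * (⟪gradient φ x0, v⟫_ℝ + (secondDD φ x0 u + 1))) := by ring
      _ ≤ φ x0 := by linarith [mul_neg_of_pos_of_neg ht h2]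
  · filter_upwards [hφ.eventually_le_add_secondDD v (c := -⟪gradient φ x0, v⟫_ℝ) (by linarith)]
      with t ht
    rw [hu] at ht
    linarith

lemma IsC11.eventually_le_of_lexLE {φ : E → ℝ} (hφ : IsC11 φ) {x0 u v w : E} {θ : ℝ}
    (hv : lexLE (⟪gradient φ x0, u⟫_ℝ, ⟪gradient φ x0, v⟫_ℝ + secondDD φ x0 u))
    (hw : ⟪gradient φ x0, u⟫_ℝ = 0 → ⟪gradient φ x0, w⟫_ℝ + secondDD φ x0 u < 0)
    (hθ0 : 0 < θ) (hθ1 : θ ≤ 1) :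
    ∀ᶠ t in 𝓝[>] (0 : ℝ), φ (x0 + t • u + ((1 / 2) * t ^ 2) • (v + θ • (w - v))) ≤ φ x0 := by
  refine hφ.eventually_le_of_lex_lt ?_
  rcases hv with hu | ⟨hu, hvD⟩
  · exact Or.inl hu
  · refine Or.inr ⟨hu, ?_⟩
    rw [inner_add_right, real_inner_smul_right, inner_sub_right]
    nlinarith [mul_le_mul_of_nonneg_left hvD (sub_nonneg.2 hθ1),
      mul_lt_mul_of_pos_left (hw hu) hθ0]

lemma IsC11.eventually_nonpos_of_lexLE {g : E → ℝ} (hg : IsC11 g) {x0 u v w : E} {θ : ℝ}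
    (hx0 : g x0 ≤ 0)
    (hv : g x0 = 0 → lexLE (⟪gradient g x0, u⟫_ℝ, ⟪gradient g x0, v⟫_ℝ + secondDD g x0 u))
    (hw : g x0 = 0 → ⟪gradient g x0, u⟫_ℝ = 0 → ⟪gradient g x0, w⟫_ℝ + secondDD g x0 u < 0)
    (hθ0 : 0 < θ) (hθ1 : θ ≤ 1) :
    ∀ᶠ t in 𝓝[>] (0 : ℝ), g (x0 + t • u + ((1 / 2) * t ^ 2) • (v + θ • (w - v))) ≤ 0 := by
  rcases hx0.lt_or_eq with hlt | heq
  · have : Continuous (fun t : ℝ => g (x0 + t • u + ((1 / 2) * t ^ 2) • (v + θ • (w - v)))) :=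
      hg.1.continuous.comp (by fun_prop)
    exact (((this.tendsto' 0 _ (by simp)).mono_left nhdsWithin_le_nhds).eventually_lt_const
      hlt).mono fun _ => le_of_lt
  · simpa only [heq] using hg.eventually_le_of_lexLE (hv heq) (hw heq) hθ0 hθ1

lemma mem_tcone2_of_tendsto {C : Set E} {x0 u v : E} {vk : ℕ → E}
    (hv : Tendsto vk atTop (𝓝 v))
    (hC : ∀ k, ∀ᶠ t in 𝓝[>] (0 : ℝ), x0 + t • u + ((1 / 2) * t ^ 2) • vk k ∈ C) :
    v ∈ tcone2 C x0 u := by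
  have : ∀ k : ℕ, ∃ t, x0 + t • u + ((1 / 2) * t ^ 2) • vk k ∈ C ∧
      t ∈ Ioo 0 (1 / ((k : ℝ) + 1)) :=
    fun k => ((hC k).and (Ioo_mem_nhdsGT (by positivity))).exists
  choose t htC ht using this
  exact ⟨t, vk, fun k => (ht k).1, squeeze_zero (fun k => (ht k).1.le) (fun k => (ht k).2.le)
    tendsto_one_div_add_atTop_nhds_zero_nat, hv, htC⟩

end SecondOrder

/-- Proposition 3.2: a sufficient condition for the Abadie second-order
regularity condition `(ASORC)`. -/
theorem stmt_1 {n l m : ℕ}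
    (f : Fin l → EuclideanSpace ℝ (Fin n) → ℝ)
    (g : Fin m → EuclideanSpace ℝ (Fin n) → ℝ)
    (hf : ∀ i, IsC11 (f i)) (hg : ∀ j, IsC11 (g j))
    (Q0 : Set (EuclideanSpace ℝ (Fin n)))
    (hQ0 : Q0 = {x | ∀ j, g j x ≤ 0})
    (x0 u : EuclideanSpace ℝ (Fin n)) (hx0 : x0 ∈ Q0)
    (hsys : ∀ i : Fin l, ∃ w : EuclideanSpace ℝ (Fin n),
      (∀ k : Fin l, k ≠ i →
        ⟪gradient (f k) x0, w⟫_ℝ + secondDD (f k) x0 u < 0) ∧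
      ∀ j : Fin m, g j x0 = 0 → ⟪gradient (g j) x0, u⟫_ℝ = 0 →
        ⟪gradient (g j) x0, w⟫_ℝ + secondDD (g j) x0 u < 0) :
    L2lin f g x0 u ⊆
      ⋂ i : Fin l, tcone2 (Q0 ∩ {x | ∀ k : Fin l, k ≠ i → f k x ≤ f k x0}) x0 u := by
  subst hQ0
  rintro v ⟨hvf, hvg⟩
  refine mem_iInter.2 fun i => ?_
  obtain ⟨w, hwf, hwg⟩ := hsys i
  refine mem_tcone2_of_tendsto (vk := fun k => v + (1 / ((k : ℝ) + 1)) • (w - v))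
    (by simpa using
      ((tendsto_one_div_add_atTop_nhds_zero_nat (𝕜 := ℝ)).smul_const (w - v)).const_add v)
    fun k => ?_
  set θ : ℝ := 1 / ((k : ℝ) + 1)
  have hθ0 : 0 < θ := by positivity
  have hθ1 : θ ≤ 1 := div_le_one_of_le₀ (by simp) (by positivity)
  have hfk : ∀ k', ∀ᶠ t in 𝓝[>] (0 : ℝ), k' ≠ i →
      f k' (x0 + t • u + ((1 / 2) * t ^ 2) • (v + θ • (w - v))) ≤ f k' x0 := by
    intro k'
    by_cases hk : k' = i
    · exact .of_forall fun _ hne => absurd hk hne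
    · exact ((hf k').eventually_le_of_lexLE (hvf k') (fun _ => hwf k' hk) hθ0 hθ1).mono
        fun _ h _ => h
  have hgj : ∀ j, ∀ᶠ t in 𝓝[>] (0 : ℝ),
      g j (x0 + t • u + ((1 / 2) * t ^ 2) • (v + θ • (w - v))) ≤ 0 :=
    fun j => (hg j).eventually_nonpos_of_lexLE (hx0 j) (hvg j) (hwg j) hθ0 hθ1
  filter_upwards [eventually_all.2 hfk, eventually_all.2 hgj] with t hft hgt
  exact ⟨hgt, hft⟩
end
end

section
/- Let Q0 := {x ∈ ℝⁿ : g_j(x) ≤ 0 for all j = 1,…,m} and let x⁰ ∈ Q0 be a Geoffrion properly efficient solution of the problem of minimizing f = (f₁,…,f_l) over Q0. Suppose that for every critical direction u at x⁰ the generalized Abadie second-order regularity condition L²(Q; x⁰, u) ⊆ ∩_{i=1}^l T²(Mⁱ; x⁰, u) holds. Then there is no pair (u, v) ∈ ℝⁿ × ℝⁿ satisfying: (⟨∇f_i(x⁰), u⟩, ⟨∇f_i(x⁰), v⟩ + f_i°°(x⁰; u, u)) ≦_lex (0,0) for all i = 1,…,l, with (⟨∇f_i(x⁰), u⟩, ⟨∇f_i(x⁰),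 v⟩ + f_i°°(x⁰; u, u)) <_lex (0,0) for at least one i, and (⟨∇g_j(x⁰), u⟩, ⟨∇g_j(x⁰), v⟩ + g_j°°(x⁰; u, u)) ≦_lex (0,0) for all j ∈ J(x⁰). -/
open Filter Topology Set
open scoped InnerProductSpace

noncomputable section

/-- `(a₁, a₂) <_lex (0, 0)`. -/
def lexLT (a : ℝ × ℝ) : Prop := a.1 < 0 ∨ (a.1 = 0 ∧ a.2 < 0)

/-- `x0` is a Geoffrion properly efficient solution of the problem of minimizing
the family `f` over `Q0`. -/
def Geoffrion {n l : ℕ} (Q0 : Set (EuclideanSpace ℝ (Fin n)))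
    (f : Fin l → EuclideanSpace ℝ (Fin n) → ℝ)
    (x0 : EuclideanSpace ℝ (Fin n)) : Prop :=
  x0 ∈ Q0 ∧
  (¬ ∃ x ∈ Q0, (∀ i, f i x ≤ f i x0) ∧ ∃ k, f k x < f k x0) ∧
  ∃ M > (0 : ℝ), ∀ i, ∀ x ∈ Q0, f i x < f i x0 →
    ∃ j, f j x0 < f j x ∧ (f i x0 - f i x) / (f j x - f j x0) ≤ M

/-- `u` is a critical direction of the problem at `x0`. -/
def Critical {n l m : ℕ} (f : Fin l → EuclideanSpace ℝ (Fin n) → ℝ)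
    (g : Fin m → EuclideanSpace ℝ (Fin n) → ℝ)
    (x0 u : EuclideanSpace ℝ (Fin n)) : Prop :=
  (∀ i, ⟪gradient (f i) x0, u⟫_ℝ = 0) ∧
  (∀ j, g j x0 = 0 → ⟪gradient (g j) x0, u⟫_ℝ ≤ 0)

/-!
Along a parabolic arc `x0 + t u + (t²/2) vₖ` in `Q0`, which the regularity condition provides
for a critical `u`, each objective changes by at most
`(t²/2) (⟪∇fᵢ x0, v⟫ + fᵢ°°(x0; u, u) + o(1))`: the first-order term vanishes, the motion along
`u` is controlled by the limsup defining `fᵢ°°` (through the mean value theorem), and the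
correction `(t²/2) vₖ` by strict differentiability. If one of these second-order rates is
negative and none is positive, the trade-off ratios in Geoffrion's definition are unbounded.
If `u` is not critical, some objective strictly decreases at first order, and `u` is then such
a second-order direction for the critical direction `0`, where `fᵢ°°(x0; 0, 0) = 0`.
-/

open InnerProductSpace Asymptotics

section StrictDeriv

variable {α E F : Type*} [NormedAddCommGroup E] [NormedSpace ℝ E]
  [NormedAddCommGroup F] [NormedSpace ℝ F]

theorem HasStrictFDerivAt.tendsto_inv_smul_sub {f : E → F} {f' : E →L[ℝ] F} {x v : E}
    (hf : HasStrictFDerivAt f f' x) {L : Filter α} {y w : α → E} {c : α → ℝ}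
    (hy : Tendsto y L (𝓝 x)) (hc : Tendsto c L (𝓝 0)) (hc0 : ∀ᶠ a in L, c a ≠ 0)
    (hw : Tendsto w L (𝓝 v)) :
    Tendsto (fun a => (c a)⁻¹ • (f (y a + c a • w a) - f (y a))) L (𝓝 (f' v)) := by
  have hpair : Tendsto (fun a => (y a + c a • w a, y a)) L (𝓝 (x, x)) := by
    have := hy.add (hc.smul hw)
    rw [zero_smul, add_zero] at this
    exact this.prodMk_nhds hy
  have hrem : (fun a => f (y a + c a • w a) - f (y a) - f' (c a • w a)) =o[L] c := by
    have h := hf.isLittleO.comp_tendsto hpair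
    simp only [Function.comp_def, add_sub_cancel_left] at h
    exact h.trans_isBigO (((isBigO_refl c L).smul (hw.isBigO_one ℝ)).congr_right (by simp))
  have hlim := hrem.tendsto_inv_smul_nhds_zero.add ((f'.continuous.tendsto v).comp hw)
  rw [zero_add] at hlim
  refine hlim.congr' (hc0.mono fun a ha => ?_)
  simp [smul_sub, smul_smul, inv_mul_cancel₀ ha]

end StrictDeriv

theorem DifferentiableAt.hasDerivAt_comp_add_smul {E : Type*} [NormedAddCommGroup E]
    [InnerProductSpace ℝ E] [CompleteSpace E] {φ : E → ℝ} {x h : E} {s : ℝ}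
    (hφ : DifferentiableAt ℝ φ (x + s • h)) :
    HasDerivAt (fun s : ℝ => φ (x + s • h)) ⟪gradient φ (x + s • h), h⟫_ℝ s := by
  have hline : HasDerivAt (fun s : ℝ => x + s • h) h s := by
    simpa using ((hasDerivAt_id s).smul_const h).const_add x
  have h := hφ.hasGradientAt.hasFDerivAt.comp_hasDerivAt s hline
  rw [toDual_apply_apply] at h
  exact h

namespace IsC11

variable {n : ℕ} {φ : EuclideanSpace ℝ (Fin n) → ℝ}

theorem contDiff (hφ : IsC11 φ) : ContDiff ℝ 1 φ :=
  contDiff_one_iff_fderiv.2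
    ⟨hφ.1, by rw [← toDual_comp_gradient]; exact (toDual ℝ _).continuous.comp hφ.2.continuous⟩

theorem isBoundedUnder_secondDD (hφ : IsC11 φ) (x0 u : EuclideanSpace ℝ (Fin n)) :
    IsBoundedUnder (· ≤ ·) (𝓝 x0 ×ˢ 𝓝[>] (0 : ℝ))
      (fun p : EuclideanSpace ℝ (Fin n) × ℝ =>
        (⟪gradient φ (p.1 + p.2 • u), u⟫_ℝ - ⟪gradient φ p.1, u⟫_ℝ) / p.2) := by
  obtain ⟨K, s, hs, hK⟩ := hφ.2 x0
  have hto : Tendsto (fun p : EuclideanSpace ℝ (Fin n) × ℝ => (p.1 + p.2 • u, p.1))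
      (𝓝 x0 ×ˢ 𝓝[>] 0) (𝓝 (x0, x0)) := by
    have hc : Continuous (fun p : EuclideanSpace ℝ (Fin n) × ℝ => (p.1 + p.2 • u, p.1)) := by
      fun_prop
    have h := hc.tendsto (x0, 0)
    rw [nhds_prod_eq] at h
    simpa using h.mono_left (Filter.prod_mono le_rfl nhdsWithin_le_nhds)
  refine ⟨K * ‖u‖ ^ 2, eventually_map.2 ?_⟩
  filter_upwards [hto.eventually (prod_mem_nhds hs hs),
    tendsto_snd.eventually eventually_mem_nhdsWithin] with p ⟨hps, hp⟩ (ht : 0 < p.2)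
  rw [div_le_iff₀ ht, ← inner_sub_left]
  calc ⟪gradient φ (p.1 + p.2 • u) - gradient φ p.1, u⟫_ℝ
      ≤ ‖gradient φ (p.1 + p.2 • u) - gradient φ p.1‖ * ‖u‖ := real_inner_le_norm _ _
    _ ≤ K * ‖p.2 • u‖ * ‖u‖ := by
        gcongr
        simpa [dist_eq_norm] using hK.dist_le_mul _ hps _ hp
    _ = K * ‖u‖ ^ 2 * p.2 := by rw [norm_smul, Real.norm_of_nonneg ht.le]; ring

theorem eventually_inner_gradient_sub_le (hφ : IsC11 φ) (x0 u : EuclideanSpace ℝ (Fin n))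
    {ε : ℝ} (hε : 0 < ε) :
    ∀ᶠ t in 𝓝[>] (0 : ℝ),
      ⟪gradient φ (x0 + t • u), u⟫_ℝ - ⟪gradient φ x0, u⟫_ℝ ≤ (secondDD φ x0 u + ε) * t := by
  have hlt := eventually_lt_of_limsup_lt (lt_add_of_pos_right (secondDD φ x0 u) hε)
    (hφ.isBoundedUnder_secondDD x0 u)
  have hto : Tendsto (fun t : ℝ => (x0, t)) (𝓝[>] 0) (𝓝 x0 ×ˢ 𝓝[>] 0) :=
    tendsto_const_nhds.prodMk tendsto_id
  filter_upwards [hto.eventually hlt, self_mem_nhdsWithin] with t ht (htpos : 0 < t)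
  exact ((div_lt_iff₀ htpos).1 ht).le

theorem eventually_sub_le_secondDD (hφ : IsC11 φ) {x0 u : EuclideanSpace ℝ (Fin n)}
    (hu : ⟪gradient φ x0, u⟫_ℝ = 0) {ε : ℝ} (hε : 0 < ε) :
    ∀ᶠ t in 𝓝[>] (0 : ℝ), φ (x0 + t • u) - φ x0 ≤ (secondDD φ x0 u + ε) * t ^ 2 / 2 := by
  obtain ⟨δ, hδ, hslope⟩ :=
    mem_nhdsGT_iff_exists_Ioo_subset.1 (hφ.eventually_inner_gradient_sub_le x0 u hε)
  filter_upwards [Ioo_mem_nhdsGT hδ] with t ⟨ht0, htδ⟩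
  set C := secondDD φ x0 u + ε
  have hderiv : ∀ s : ℝ, HasDerivAt (fun s : ℝ => φ (x0 + s • u) - C * s ^ 2 / 2)
      (⟪gradient φ (x0 + s • u), u⟫_ℝ - C * s) s := fun s =>
    (((hφ.1 _).hasDerivAt_comp_add_smul (x := x0) (h := u)).sub
      (((hasDerivAt_pow 2 s).const_mul C).div_const 2)).congr_deriv (by push_cast; ring)
  obtain ⟨ξ, ⟨hξ0, hξt⟩, hξ⟩ := exists_hasDerivAt_eq_slope _ _ ht0
    (fun s _ => (hderiv s).continuousAt.continuousWithinAt) (fun s _ => hderiv s)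
  have hξneg : ⟪gradient φ (x0 + ξ • u), u⟫_ℝ - C * ξ ≤ 0 := by
    have := hslope ⟨hξ0, hξt.trans htδ⟩
    simp only [mem_ofPred_eq, hu] at this
    linarith
  rw [hξ, div_le_iff₀ (sub_pos.2 ht0), zero_mul] at hξneg
  simp only [zero_smul, add_zero] at hξneg
  linarith

theorem eventually_sub_le_of_tendsto (hφ : IsC11 φ) {x0 u v : EuclideanSpace ℝ (Fin n)}
    (hu : ⟪gradient φ x0, u⟫_ℝ = 0) {α : Type*} {L : Filter α} {t : α → ℝ}
    {w : α → EuclideanSpace ℝ (Fin n)} (htpos : ∀ᶠ k in L, 0 < t k)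
    (ht : Tendsto t L (𝓝 0)) (hw : Tendsto w L (𝓝 v)) {ε : ℝ} (hε : 0 < ε) :
    ∀ᶠ k in L, φ (x0 + t k • u + ((1 / 2) * t k ^ 2) • w k) - φ x0 ≤
      ((1 / 2) * t k ^ 2) * (⟪gradient φ x0, v⟫_ℝ + secondDD φ x0 u + ε) := by
  set c : α → ℝ := fun k => (1 / 2) * t k ^ 2
  have hline : ∀ᶠ k in L, φ (x0 + t k • u) - φ x0 ≤ (secondDD φ x0 u + ε / 2) * t k ^ 2 / 2 :=
    (tendsto_nhdsWithin_iff.2 ⟨ht, htpos⟩).eventually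
      (hφ.eventually_sub_le_secondDD hu (half_pos hε))
  have hquot : Tendsto (fun k => (c k)⁻¹ • (φ (x0 + t k • u + c k • w k) - φ (x0 + t k • u)))
      L (𝓝 ⟪gradient φ x0, v⟫_ℝ) := by
    have hy : Tendsto (fun k => x0 + t k • u) L (𝓝 x0) := by
      simpa using tendsto_const_nhds.add (ht.smul_const u)
    have hc : Tendsto c L (𝓝 0) := by simpa [c] using (ht.pow 2).const_mul (1 / 2 : ℝ)
    rw [inner_gradient_left]
    exact ((hφ.contDiff.contDiffAt).hasStrictFDerivAt one_ne_zero).tendsto_inv_smul_sub hy hc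
      (htpos.mono fun k hk => by positivity) hw
  have hstep : ∀ᶠ k in L, φ (x0 + t k • u + c k • w k) - φ (x0 + t k • u) ≤
      c k * (⟪gradient φ x0, v⟫_ℝ + ε / 2) := by
    filter_upwards [hquot.eventually (eventually_le_nhds (lt_add_of_pos_right _ (half_pos hε))),
      htpos] with k hk htk
    rwa [smul_eq_mul, inv_mul_le_iff₀ (by positivity)] at hk
  filter_upwards [hline, hstep] with k h1 h2
  simp only [c] at h2 ⊢
  linarith

end IsC11

theorem Geoffrion.false_of_eventually_sub_le {n l : ℕ} {Q0 : Set (EuclideanSpace ℝ (Fin n))}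
    {f : Fin l → EuclideanSpace ℝ (Fin n) → ℝ} {x0 : EuclideanSpace ℝ (Fin n)}
    (hG : Geoffrion Q0 f x0) {α : Type*} {L : Filter α} [L.NeBot]
    {x : α → EuclideanSpace ℝ (Fin n)} {c : α → ℝ} (hx : ∀ᶠ k in L, x k ∈ Q0)
    (hc : ∀ᶠ k in L, 0 < c k) {a : Fin l → ℝ} (ha : ∀ i, a i ≤ 0) {i0 : Fin l} (hi0 : a i0 < 0)
    (hle : ∀ ε > 0, ∀ᶠ k in L, ∀ i, f i (x k) - f i x0 ≤ c k * (a i + ε)) : False := by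
  obtain ⟨-, -, M, hM, hbound⟩ := hG
  -- with `(M + 1) ε < -a i0`, `f i0` drops by more than `M` times the rise of any `f j`
  set ε := -a i0 / (2 * (M + 1))
  have hε : 0 < ε := div_pos (neg_pos.2 hi0) (by positivity)
  have hMε : (M + 1) * ε = -a i0 / 2 := by simp only [ε]; field_simp
  obtain ⟨k, hxk, hck, hk⟩ := (hx.and (hc.and (hle ε hε))).exists
  have hdec : f i0 x0 - f i0 (x k) ≥ c k * (-a i0 - ε) := by linarith [hk i0]
  have hεlt : ε < -a i0 := by nlinarith
  have hpos : 0 < c k * (-a i0 - ε) := mul_pos hck (by linarith)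
  obtain ⟨j, hj, hratio⟩ := hbound i0 (x k) hxk (by linarith)
  have hinc : f j (x k) - f j x0 ≤ c k * ε := by nlinarith [hk j, ha j]
  have hMinc : f i0 x0 - f i0 (x k) ≤ M * (c k * ε) :=
    ((div_le_iff₀ (sub_pos.2 hj)).1 hratio).trans (by gcongr)
  nlinarith

theorem Geoffrion.inner_gradient_add_secondDD_nonneg {n l : ℕ}
    {Q0 : Set (EuclideanSpace ℝ (Fin n))} {f : Fin l → EuclideanSpace ℝ (Fin n) → ℝ}
    {x0 u v : EuclideanSpace ℝ (Fin n)} (hG : Geoffrion Q0 f x0) (hf : ∀ i, IsC11 (f i))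
    (hu : ∀ i, ⟪gradient (f i) x0, u⟫_ℝ = 0) (hv : v ∈ tcone2 Q0 x0 u)
    (hle : ∀ i, ⟪gradient (f i) x0, v⟫_ℝ + secondDD (f i) x0 u ≤ 0) (i0 : Fin l) :
    0 ≤ ⟪gradient (f i0) x0, v⟫_ℝ + secondDD (f i0) x0 u := by
  obtain ⟨t, w, htpos, ht, hw, hmem⟩ := hv
  by_contra! hneg
  exact hG.false_of_eventually_sub_le (L := atTop) (Eventually.of_forall hmem)
    (Eventually.of_forall fun k => by have := htpos k; positivity) hle hneg fun ε hε =>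
      eventually_all.2 fun i => (hf i).eventually_sub_le_of_tendsto (hu i)
        (Eventually.of_forall htpos) ht hw hε

theorem tcone2_mono {n : ℕ} {C D : Set (EuclideanSpace ℝ (Fin n))} (hCD : C ⊆ D)
    (x0 u : EuclideanSpace ℝ (Fin n)) : tcone2 C x0 u ⊆ tcone2 D x0 u :=
  fun _ ⟨t, w, htpos, ht, hw, hmem⟩ => ⟨t, w, htpos, ht, hw, fun k => hCD (hmem k)⟩

theorem lexLE.fst_nonpos {a : ℝ × ℝ} (h : lexLE a) : a.1 ≤ 0 := by
  rcases h with h | ⟨h, -⟩ <;> linarith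

theorem lexLE.snd_nonpos {a : ℝ × ℝ} (h : lexLE a) (h1 : a.1 = 0) : a.2 ≤ 0 := by
  rcases h with h | ⟨-, h⟩ <;> linarith

theorem lexLT.snd_neg {a : ℝ × ℝ} (h : lexLT a) (h1 : a.1 = 0) : a.2 < 0 := by
  rcases h with h | ⟨-, h⟩ <;> linarith

theorem secondDD_zero {n : ℕ} (φ : EuclideanSpace ℝ (Fin n) → ℝ)
    (x0 : EuclideanSpace ℝ (Fin n)) : secondDD φ x0 0 = 0 := by
  simp [secondDD]

theorem critical_zero {n l m : ℕ} (f : Fin l → EuclideanSpace ℝ (Fin n) → ℝ)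
    (g : Fin m → EuclideanSpace ℝ (Fin n) → ℝ) (x0 : EuclideanSpace ℝ (Fin n)) :
    Critical f g x0 0 :=
  ⟨fun _ => inner_zero_right _, fun _ _ => (inner_zero_right _).le⟩

theorem mem_L2lin_zero_iff {n l m : ℕ} {f : Fin l → EuclideanSpace ℝ (Fin n) → ℝ}
    {g : Fin m → EuclideanSpace ℝ (Fin n) → ℝ} {x0 v : EuclideanSpace ℝ (Fin n)} :
    v ∈ L2lin f g x0 0 ↔ (∀ i, ⟪gradient (f i) x0, v⟫_ℝ ≤ 0) ∧
      ∀ j, g j x0 = 0 → ⟪gradient (g j) x0, v⟫_ℝ ≤ 0 := by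
  simp [L2lin, lexLE, secondDD_zero]

theorem stmt_3_general {n l m : ℕ}
    (f : Fin l → EuclideanSpace ℝ (Fin n) → ℝ)
    (g : Fin m → EuclideanSpace ℝ (Fin n) → ℝ)
    (hf : ∀ i, IsC11 (f i))
    (Q0 : Set (EuclideanSpace ℝ (Fin n)))
    (x0 : EuclideanSpace ℝ (Fin n))
    (hgeof : Geoffrion Q0 f x0)
    (hreg : ∀ u : EuclideanSpace ℝ (Fin n), Critical f g x0 u →
      L2lin f g x0 u ⊆ ⋂ i : Fin l, tcone2 (Q0 ∩ {x | f i x ≤ f i x0}) x0 u) :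
    ¬ ∃ u v : EuclideanSpace ℝ (Fin n),
      (∀ i, lexLE (⟪gradient (f i) x0, u⟫_ℝ,
        ⟪gradient (f i) x0, v⟫_ℝ + secondDD (f i) x0 u)) ∧
      (∃ i, lexLT (⟪gradient (f i) x0, u⟫_ℝ,
        ⟪gradient (f i) x0, v⟫_ℝ + secondDD (f i) x0 u)) ∧
      (∀ j, g j x0 = 0 → lexLE (⟪gradient (g j) x0, u⟫_ℝ,
        ⟪gradient (g j) x0, v⟫_ℝ + secondDD (g j) x0 u)) := by
  rintro ⟨u, v, hfu, ⟨i0, hi0⟩, hgu⟩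
  have htangent : ∀ {u v}, Critical f g x0 u → v ∈ L2lin f g x0 u → v ∈ tcone2 Q0 x0 u :=
    fun hu hv => tcone2_mono inter_subset_left _ _ (mem_iInter.1 (hreg _ hu hv) i0)
  by_cases hcrit : ∀ i, ⟪gradient (f i) x0, u⟫_ℝ = 0
  · have hv := htangent ⟨hcrit, fun j hj => (hgu j hj).fst_nonpos⟩ ⟨hfu, hgu⟩
    exact (hi0.snd_neg (hcrit i0)).not_ge <| hgeof.inner_gradient_add_secondDD_nonneg hf hcrit hv
      (fun i => (hfu i).snd_nonpos (hcrit i)) i0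
  · obtain ⟨i1, hi1⟩ := not_forall.1 hcrit
    have hu := htangent (critical_zero f g x0)
      (mem_L2lin_zero_iff.2 ⟨fun i => (hfu i).fst_nonpos, fun j hj => (hgu j hj).fst_nonpos⟩)
    have h := hgeof.inner_gradient_add_secondDD_nonneg hf (fun _ => inner_zero_right _) hu
      (fun i => by simpa [secondDD_zero] using (hfu i).fst_nonpos) i1
    rw [secondDD_zero, add_zero] at h
    exact hi1 (le_antisymm (hfu i1).fst_nonpos h)

/-- Theorem 4.2: the primal second-order necessary condition for Geoffrion proper
efficiency under the `(GASORC)` at every critical direction. -/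
theorem stmt_3 {n l m : ℕ}
    (f : Fin l → EuclideanSpace ℝ (Fin n) → ℝ)
    (g : Fin m → EuclideanSpace ℝ (Fin n) → ℝ)
    (hf : ∀ i, IsC11 (f i)) (hg : ∀ j, IsC11 (g j))
    (Q0 : Set (EuclideanSpace ℝ (Fin n)))
    (hQ0 : Q0 = {x | ∀ j, g j x ≤ 0})
    (x0 : EuclideanSpace ℝ (Fin n))
    (hgeof : Geoffrion Q0 f x0)
    (hreg : ∀ u : EuclideanSpace ℝ (Fin n), Critical f g x0 u →
      L2lin f g x0 u ⊆ ⋂ i : Fin l, tcone2 (Q0 ∩ {x | f i x ≤ f i x0}) x0 u) :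
    ¬ ∃ u v : EuclideanSpace ℝ (Fin n),
      (∀ i, lexLE (⟪gradient (f i) x0, u⟫_ℝ,
        ⟪gradient (f i) x0, v⟫_ℝ + secondDD (f i) x0 u)) ∧
      (∃ i, lexLT (⟪gradient (f i) x0, u⟫_ℝ,
        ⟪gradient (f i) x0, v⟫_ℝ + secondDD (f i) x0 u)) ∧
      (∀ j, g j x0 = 0 → lexLE (⟪gradient (g j) x0, u⟫_ℝ,
        ⟪gradient (g j) x0, v⟫_ℝ + secondDD (g j) x0 u)) :=
  stmt_3_general f g hf Q0 x0 hgeof hreg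
end
end
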